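/- Let L_K, L_W, S_K, S_W, D_K, D_W be admissible functions with L's and D's non-increasing and S's non-decreasing, and fix M₀ ∈ ℕ. Define F(I; M₀) = L_K(|I|)S_K(|I|)D_K(rdist(I,𝔹)) + L_W(2^{−M₀}|I|)S_W(2^{M₀}|I|)D_W(M₀^{−1} rdist(I, 𝔹_{2^{M₀}})). Then for every ε > 0 there exists M₁ > M₀ such that for all M > M₁ and every interval I not in 𝓘_M (i.e., |I| > 2^M, or |I| < 2^{−M}, or 2^{−M} ≤ |I| ≤ 2^M with rdist(I, 𝔹_{2^M}) > M), one has F(I; M₀) ≲ ε. -/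

import Mathlib

open Filter

/-- A set of admissible functions: bounded, nonnegative, with the limits
`L(x) → 0` as `x → ∞`, `S(x) → 0` as `x → 0`, `D(x) → 0` as `x → ∞`. -/
def Admissible (L S D : ℝ → ℝ) : Prop :=
  (∀ x, 0 ≤ L x) ∧ (∀ x, 0 ≤ S x) ∧ (∀ x, 0 ≤ D x) ∧
  (∃ B : ℝ, ∀ x, L x ≤ B ∧ S x ≤ B ∧ D x ≤ B) ∧
  Tendsto L atTop (nhds 0) ∧
  Tendsto S (nhdsWithin 0 (Set.Ioi 0)) (nhds 0) ∧
  Tendsto D atTop (nhds 0)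

/-- `diam(I ∪ J)` for intervals given by centers and lengths. -/
noncomputable def diamUnion (c1 l1 c2 l2 : ℝ) : ℝ :=
  max (c1 + l1 / 2) (c2 + l2 / 2) - min (c1 - l1 / 2) (c2 - l2 / 2)

/-- The relative distance `rdist(I,J) = diam(I ∪ J)/max(|I|,|J|)`. -/
noncomputable def rdistI (c1 l1 c2 l2 : ℝ) : ℝ := diamUnion c1 l1 c2 l2 / max l1 l2

/-!
Each term of `F(I; M₀)` is a product of three bounded nonnegative factors, so it is `≲ ε` as soon
as one factor is `≤ ε`: as soon as the `L`-argument is large, the `S`-argument is small, or the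
`D`-argument is large. An interval `I ∉ 𝓘_M` is longer than `2^M`, shorter than `2^{-M}`, or has
its centre at distance `≳ M 2^M` from the origin; in the last case `rdist(I, 𝔹_λ) ≥ M/2 - 1` for
every `λ ≤ 2^M`. For `M` large compared with `M₀`, each alternative makes one argument extreme in
both terms.
-/

lemma abs_le_diamUnion {c l lam : ℝ} (hl : 0 ≤ l) (hlam : 0 ≤ lam) :
    |c| ≤ diamUnion c l 0 lam := by
  unfold diamUnion
  rcases abs_cases c with ⟨h, _⟩ | ⟨h, _⟩ <;> rw [h] <;>
  · have := le_max_left (c + l / 2) (0 + lam / 2)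
    have := le_max_right (c + l / 2) (0 + lam / 2)
    have := min_le_left (c - l / 2) (0 - lam / 2)
    have := min_le_right (c - l / 2) (0 - lam / 2)
    linarith

lemma diamUnion_le {c l lam : ℝ} (hl : 0 ≤ l) (hlam : 0 ≤ lam) :
    diamUnion c l 0 lam ≤ 2 * |c| + l + lam := by
  unfold diamUnion
  have := le_abs_self c
  have := neg_abs_le c
  have := abs_nonneg c
  have : max (c + l / 2) (0 + lam / 2) ≤ |c| + l / 2 + lam / 2 :=
    max_le (by linarith) (by linarith)
  have : -(|c| + l / 2 + lam / 2) ≤ min (c - l / 2) (0 - lam / 2) :=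
    le_min (by linarith) (by linarith)
  linarith

-- Both relative distances are comparable to `|c| / Λ`.
lemma half_sub_one_lt_rdistI {c l lam Λ r : ℝ} (hl : 0 < l) (hlΛ : l ≤ Λ) (hlam : 0 ≤ lam)
    (hlamΛ : lam ≤ Λ) (hr : r < rdistI c l 0 Λ) : r / 2 - 1 < rdistI c l 0 lam := by
  have hΛ : 0 < Λ := hl.trans_le hlΛ
  have hc : (r - 2) * Λ < 2 * |c| := by
    rw [rdistI, max_eq_right hlΛ, lt_div_iff₀ hΛ] at hr
    linarith [diamUnion_le (c := c) hl.le hΛ.le]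
  calc r / 2 - 1 < |c| / Λ := by rw [lt_div_iff₀ hΛ]; linarith
    _ ≤ rdistI c l 0 lam :=
      have hdiam := abs_le_diamUnion (c := c) hl.le hlam
      div_le_div₀ ((abs_nonneg c).trans hdiam) hdiam (hl.trans_le (le_max_left _ _))
        (max_le hlΛ hlamΛ)

lemma extreme_args_of_outside_family {c l σ m R Λ r : ℝ} (hσ : 0 < σ) (hσΛ : σ ≤ Λ)
    (hm : 0 < m) (hR : 0 < R) (hRΛ : R * σ ≤ Λ) (hRr : 2 * m * R + 2 ≤ r) (hl : 0 < l)
    (hI : Λ < l ∨ l < Λ⁻¹ ∨ (l ≤ Λ ∧ r < rdistI c l 0 Λ)) :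
    R ≤ σ⁻¹ * l ∨ σ * l ≤ R⁻¹ ∨ R ≤ m⁻¹ * rdistI c l 0 σ := by
  have hΛ : 0 < Λ := hσ.trans_le hσΛ
  rcases hI with hlarge | hsmall | ⟨hlΛ, hfar⟩
  · left
    rw [inv_mul_eq_div, le_div_iff₀ hσ]
    linarith
  · right; left
    calc σ * l ≤ σ / Λ := by rw [div_eq_mul_inv]; gcongr
      _ ≤ R⁻¹ := by rwa [div_le_iff₀ hΛ, le_inv_mul_iff₀ hR]
  · right; right
    rw [inv_mul_eq_div, le_div_iff₀' hm]
    linarith [half_sub_one_lt_rdistI hl hlΛ hσ.le hσΛ hfar]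

lemma eventually_extreme_args_of_outside_family {σ m R : ℝ} (hσ : 0 < σ) (hm : 0 < m)
    (hR : 0 < R) :
    ∀ᶠ M : ℕ in atTop, ∀ c l : ℝ, 0 < l →
      ((2 : ℝ) ^ M < l ∨ l < (2 : ℝ) ^ (-(M : ℤ)) ∨
        ((2 : ℝ) ^ (-(M : ℤ)) ≤ l ∧ l ≤ 2 ^ M ∧ (M : ℝ) < rdistI c l 0 (2 ^ M))) →
      R ≤ σ⁻¹ * l ∨ σ * l ≤ R⁻¹ ∨ R ≤ m⁻¹ * rdistI c l 0 σ := by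
  have hpow : Tendsto (fun M : ℕ => (2 : ℝ) ^ M) atTop atTop :=
    tendsto_pow_atTop_atTop_of_one_lt one_lt_two
  filter_upwards [hpow.eventually_ge_atTop σ, hpow.eventually_ge_atTop (R * σ),
    tendsto_natCast_atTop_atTop.eventually_ge_atTop (2 * m * R + 2)]
    with M hσM hRM hrM c l hl hI
  rw [zpow_neg, zpow_natCast] at hI
  exact extreme_args_of_outside_family hσ hσM hm hR hRM hrM hl (by tauto)

lemma mul_mul_le_sq_mul_of_le {a b c B ε : ℝ} (ha : 0 ≤ a) (hb : 0 ≤ b) (hc : 0 ≤ c)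
    (haB : a ≤ B) (hbB : b ≤ B) (hcB : c ≤ B) (h : a ≤ ε ∨ b ≤ ε ∨ c ≤ ε) :
    a * b * c ≤ B ^ 2 * ε := by
  have hB : 0 ≤ B := ha.trans haB
  have key : ∀ {x y z : ℝ}, 0 ≤ y → 0 ≤ z → x ≤ ε → y ≤ B → z ≤ B → 0 ≤ ε →
      x * (y * z) ≤ B ^ 2 * ε := fun hy hz hx hyB hzB hε => by
    nlinarith [mul_nonneg (sub_nonneg.2 hx) (mul_nonneg hy hz),
      mul_nonneg hε (sub_nonneg.2 (mul_le_mul hyB hzB hz hB))]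
  rcases h with h | h | h
  · linarith [key hb hc h hbB hcB (ha.trans h)]
  · linarith [key ha hc h haB hcB (hb.trans h)]
  · linarith [key ha hb h haB hbB (hc.trans h)]

theorem Admissible.exists_forall_mul_mul_le {L S D : ℝ → ℝ} (h : Admissible L S D) :
    ∃ C > 0, ∀ ε > 0, ∀ᶠ R in atTop, ∀ x y z : ℝ, 0 < y → (R ≤ x ∨ y ≤ R⁻¹ ∨ R ≤ z) →
      L x * S y * D z ≤ C * ε := by
  obtain ⟨hL0, hS0, hD0, ⟨B, hB⟩, hL, hS, hD⟩ := h
  refine ⟨max B 1 ^ 2, by positivity, fun ε hε => ?_⟩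
  obtain ⟨u, hu, hSu⟩ :=
    mem_nhdsGT_iff_exists_Ioo_subset.1 (hS.eventually_lt_const hε)
  filter_upwards [eventually_forall_ge_atTop.2 (hL.eventually_lt_const hε),
    eventually_forall_ge_atTop.2 (hD.eventually_lt_const hε),
    tendsto_inv_atTop_zero.eventually_lt_const (Set.mem_Ioi.1 hu)]
    with R hLR hDR hSR x y z hy hxyz
  have hB' : ∀ x, L x ≤ max B 1 ∧ S x ≤ max B 1 ∧ D x ≤ max B 1 := fun x =>
    ⟨(hB x).1.trans (le_max_left _ _), (hB x).2.1.trans (le_max_left _ _),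
      (hB x).2.2.trans (le_max_left _ _)⟩
  refine mul_mul_le_sq_mul_of_le (hL0 x) (hS0 y) (hD0 z) (hB' x).1 (hB' y).2.1 (hB' z).2.2 ?_
  rcases hxyz with hx | hy' | hz
  · exact Or.inl (hLR x hx).le
  · exact Or.inr (Or.inl (hSu ⟨hy, hy'.trans_lt hSR⟩).le)
  · exact Or.inr (Or.inr (hDR z hz).le)

theorem statement18_general (LK SK DK LW SW DW : ℝ → ℝ)
    (hK : Admissible LK SK DK) (hW : Admissible LW SW DW)
    (M₀ : ℕ) (hM₀ : 1 ≤ M₀) :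
    ∃ C' > 0, ∀ ε > 0, ∃ M₁ : ℕ, M₀ < M₁ ∧ ∀ M : ℕ, M₁ < M →
      ∀ c l : ℝ, 0 < l →
        ((2 : ℝ) ^ M < l ∨ l < (2 : ℝ) ^ (-(M : ℤ)) ∨
          ((2 : ℝ) ^ (-(M : ℤ)) ≤ l ∧ l ≤ 2 ^ M ∧
            (M : ℝ) < rdistI c l 0 (2 ^ M))) →
        LK l * SK l * DK (rdistI c l 0 1) +
            LW ((2 : ℝ) ^ (-(M₀ : ℤ)) * l) * SW ((2 : ℝ) ^ M₀ * l) *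
              DW ((M₀ : ℝ)⁻¹ * rdistI c l 0 (2 ^ M₀))
          ≤ C' * ε := by
  obtain ⟨CK, hCK, hKsmall⟩ := hK.exists_forall_mul_mul_le
  obtain ⟨CW, hCW, hWsmall⟩ := hW.exists_forall_mul_mul_le
  refine ⟨CK + CW, by positivity, fun ε hε => ?_⟩
  obtain ⟨R, hR, hRK, hRW⟩ :=
    ((eventually_gt_atTop 0).and ((hKsmall ε hε).and (hWsmall ε hε))).exists
  obtain ⟨M₁, hM₁⟩ := eventually_atTop.1
    ((eventually_extreme_args_of_outside_family one_pos one_pos hR).and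
      (eventually_extreme_args_of_outside_family (pow_pos two_pos M₀) (Nat.cast_pos.2 hM₀) hR))
  refine ⟨M₁ + M₀ + 1, by omega, fun M hM c l hl hI => ?_⟩
  obtain ⟨hKM, hWM⟩ := hM₁ M (by omega)
  have hKterm := hRK l l _ hl (by simpa only [inv_one, one_mul] using hKM c l hl hI)
  have hWterm := hRW (2 ^ (-(M₀ : ℤ)) * l) (2 ^ M₀ * l) ((M₀ : ℝ)⁻¹ * rdistI c l 0 (2 ^ M₀))
    (by positivity) (by rw [zpow_neg, zpow_natCast]; exact hWM c l hl hI)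
  linarith

/-- For monotone admissible functions and fixed `M₀`, the quantity
`F(I;M₀) = L_K(|I|)S_K(|I|)D_K(rdist(I,𝔹)) +
L_W(2^{−M₀}|I|)S_W(2^{M₀}|I|)D_W(M₀⁻¹ rdist(I,𝔹_{2^{M₀}}))`
satisfies `F(I;M₀) ≲ ε` for all intervals `I ∉ 𝓘_M`, once `M` is large enough. -/
theorem statement18 (LK SK DK LW SW DW : ℝ → ℝ)
    (hK : Admissible LK SK DK) (hW : Admissible LW SW DW)
    (hLKmono : ∀ x y : ℝ, x ≤ y → LK y ≤ LK x)
    (hSKmono : ∀ x y : ℝ, x ≤ y → SK x ≤ SK y)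
    (hDKmono : ∀ x y : ℝ, x ≤ y → DK y ≤ DK x)
    (hLWmono : ∀ x y : ℝ, x ≤ y → LW y ≤ LW x)
    (hSWmono : ∀ x y : ℝ, x ≤ y → SW x ≤ SW y)
    (hDWmono : ∀ x y : ℝ, x ≤ y → DW y ≤ DW x)
    (M₀ : ℕ) (hM₀ : 1 ≤ M₀) :
    ∃ C' > 0, ∀ ε > 0, ∃ M₁ : ℕ, M₀ < M₁ ∧ ∀ M : ℕ, M₁ < M →
      ∀ c l : ℝ, 0 < l →
        ((2 : ℝ) ^ M < l ∨ l < (2 : ℝ) ^ (-(M : ℤ)) ∨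
          ((2 : ℝ) ^ (-(M : ℤ)) ≤ l ∧ l ≤ 2 ^ M ∧
            (M : ℝ) < rdistI c l 0 (2 ^ M))) →
        LK l * SK l * DK (rdistI c l 0 1) +
            LW ((2 : ℝ) ^ (-(M₀ : ℤ)) * l) * SW ((2 : ℝ) ^ M₀ * l) *
              DW ((M₀ : ℝ)⁻¹ * rdistI c l 0 (2 ^ M₀))
          ≤ C' * ε :=
  statement18_general LK SK DK LW SW DW hK hW M₀ hM₀
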